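/- arXiv:2311.02952 — 5 statements merged into one kernel-verified Lean document; each statement's English description precedes it below -/
import Mathlib

section
/- For every real 3×3 matrix A, the square of the Frobenius norm of A is at least √3 times the Frobenius norm of the cofactor matrix of A, i.e. |A|² ≥ √3·|cof A|. -/
/-- Frobenius norm of a real 3×3 matrix. -/
noncomputable def frob (A : Matrix (Fin 3) (Fin 3) ℝ) : ℝ :=
  Real.sqrt (∑ i, ∑ j, A i j ^ 2)

/-- Cofactor matrix: `cof A = (adj A)ᵀ`. -/
noncomputable def cof (A : Matrix (Fin 3) (Fin 3) ℝ) : Matrix (Fin 3) (Fin 3) ℝ :=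
  (Matrix.adjugate A).transpose

lemma key_ineq (a b c d e f g h i : ℝ) :
    ((a^2+b^2+c^2+d^2+e^2+f^2+g^2+h^2+i^2)^2 : ℝ) ≥
      3 * ((e*i-f*h)^2 + (d*i-f*g)^2 + (d*h-e*g)^2 + (b*i-c*h)^2 + (a*i-c*g)^2
        + (a*h-b*g)^2 + (b*f-c*e)^2 + (a*f-c*d)^2 + (a*e-b*d)^2) := by
  have hid : (a^2+b^2+c^2+d^2+e^2+f^2+g^2+h^2+i^2)^2
      - 3 * ((e*i-f*h)^2 + (d*i-f*g)^2 + (d*h-e*g)^2 + (b*i-c*h)^2 + (a*i-c*g)^2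
        + (a*h-b*g)^2 + (b*f-c*e)^2 + (a*f-c*d)^2 + (a*e-b*d)^2)
      = (1/2) * (((a^2+d^2+g^2) - (b^2+e^2+h^2))^2 + ((b^2+e^2+h^2) - (c^2+f^2+i^2))^2
        + ((a^2+d^2+g^2) - (c^2+f^2+i^2))^2)
        + 3 * ((a*b+d*e+g*h)^2 + (a*c+d*f+g*i)^2 + (b*c+e*f+h*i)^2) := by ring
  linarith [sq_nonneg ((a^2+d^2+g^2) - (b^2+e^2+h^2)),
    sq_nonneg ((b^2+e^2+h^2) - (c^2+f^2+i^2)),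
    sq_nonneg ((a^2+d^2+g^2) - (c^2+f^2+i^2)),
    sq_nonneg (a*b+d*e+g*h), sq_nonneg (a*c+d*f+g*i), sq_nonneg (b*c+e*f+h*i)]

theorem frob_sq_ge_sqrt3_mul_frob_cof (A : Matrix (Fin 3) (Fin 3) ℝ) :
    frob A ^ 2 ≥ Real.sqrt 3 * frob (cof A) := by
  set S : ℝ := ∑ i, ∑ j, A i j ^ 2 with hSdef
  have hS : 0 ≤ S := by positivity
  have hC : 0 ≤ ∑ i, ∑ j, cof A i j ^ 2 := by positivity
  have hfrobA : frob A ^ 2 = S := Real.sq_sqrt hS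
  have hkey : S ^ 2 ≥ 3 * (∑ i, ∑ j, cof A i j ^ 2) := by
    have := key_ineq (A 0 0) (A 0 1) (A 0 2) (A 1 0) (A 1 1) (A 1 2) (A 2 0) (A 2 1) (A 2 2)
    simp only [hSdef, cof, Matrix.adjugate_fin_three, Matrix.transpose_apply,
      Fin.sum_univ_three, Matrix.of_apply, Matrix.cons_val', Matrix.cons_val_zero,
      Matrix.cons_val_one, Matrix.head_cons, Matrix.empty_val',
      Matrix.cons_val_fin_one, Matrix.head_fin_const, Matrix.cons_val_two,
      Matrix.tail_cons]
    linarith [this]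
  rw [hfrobA]
  calc Real.sqrt 3 * frob (cof A)
      = Real.sqrt (3 * (∑ i, ∑ j, cof A i j ^ 2)) := by
        rw [frob, ← Real.sqrt_mul (by norm_num)]
    _ ≤ Real.sqrt (S ^ 2) := Real.sqrt_le_sqrt (by linarith)
    _ = S := by rw [Real.sqrt_sq hS]
end

section
/- For every real 3×3 matrix A with positive determinant, |A|² ≥ 2|cof A| − 2·max{1, det A}. -/
/-!
Let `a, b, c ≥ 0` be the eigenvalues of `AᵀA`. Then `|A|² = a + b + c`,
`|cof A|² = ab + bc + ca` and `(det A)² = abc`, so with `m = max{1, det A}` we have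
`abc ≤ m² ≤ m³` and the smallest eigenvalue, say `c`, is at most `m`. The identity
`(a + b + c + 2m)² - 4(ab + bc + ca) = (a - b)² + 2(a + b)(2m - c) + (c + 2m)²`
then gives `2 |cof A| ≤ |A|² + 2m`.
-/

open Matrix

section Scalar

variable {R : Type*} [CommRing R] [LinearOrder R] [IsStrictOrderedRing R]

lemma four_mul_sum_mul_le_sq_of_le_two_mul {a b c m : R} (hab : 0 ≤ a + b) (hc : c ≤ 2 * m) :
    4 * (a * b + b * c + c * a) ≤ (a + b + c + 2 * m) ^ 2 := by
  nlinarith [sq_nonneg (a - b), sq_nonneg (c + 2 * m), mul_nonneg hab (sub_nonneg.2 hc)]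

lemma le_or_le_or_le_of_mul_mul_le_sq {a b c m : R} (hm : 1 ≤ m) (habc : a * b * c ≤ m ^ 2) :
    a ≤ m ∨ b ≤ m ∨ c ≤ m := by
  by_contra! h
  obtain ⟨ha, hb, hc⟩ := h
  have hab : m * m < a * b := mul_lt_mul'' ha hb (by linarith) (by linarith)
  nlinarith [mul_lt_mul'' hab hc (by positivity) (by linarith)]

end Scalar

lemma two_mul_sqrt_sum_mul_le {a b c m : ℝ} (ha : 0 ≤ a) (hb : 0 ≤ b) (hc : 0 ≤ c) (hm : 1 ≤ m)
    (habc : a * b * c ≤ m ^ 2) : 2 * √(a * b + b * c + c * a) ≤ a + b + c + 2 * m := by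
  have key : 4 * (a * b + b * c + c * a) ≤ (a + b + c + 2 * m) ^ 2 := by
    rcases le_or_le_or_le_of_mul_mul_le_sq hm habc with h | h | h
    · linear_combination four_mul_sum_mul_le_sq_of_le_two_mul (by positivity : 0 ≤ b + c)
        (by linarith : a ≤ 2 * m)
    · linear_combination four_mul_sum_mul_le_sq_of_le_two_mul (by positivity : 0 ≤ c + a)
        (by linarith : b ≤ 2 * m)
    · exact four_mul_sum_mul_le_sq_of_le_two_mul (by positivity) (by linarith)
  refine le_of_pow_le_pow_left₀ two_ne_zero (by positivity) ?_
  rw [mul_pow, Real.sq_sqrt (by positivity)]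
  linarith

theorem Matrix.IsHermitian.trace_mul_self_eq_sum_sq_eigenvalues {𝕜 n : Type*} [RCLike 𝕜]
    [Fintype n] [DecidableEq n] {A : Matrix n n 𝕜} (hA : A.IsHermitian) :
    (A * A).trace = ∑ i, (hA.eigenvalues i : 𝕜) ^ 2 := by
  conv_lhs => rw [hA.spectral_theorem, ← map_mul, Unitary.conjStarAlgAut_apply, trace_mul_cycle,
    Unitary.coe_star_mul_self, one_mul, diagonal_mul_diagonal, trace_diagonal]
  simp [sq]

theorem Matrix.sum_sq_eq_trace_transpose_mul_self {R m n : Type*} [CommSemiring R] [Fintype m]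
    [Fintype n] (A : Matrix m n R) : ∑ i, ∑ j, A i j ^ 2 = (Aᵀ * A).trace := by
  simp only [trace, diag, mul_apply, transpose_apply, sq]
  exact Finset.sum_comm

lemma two_mul_sum_sq_cof (A : Matrix (Fin 3) (Fin 3) ℝ) :
    2 * ∑ i, ∑ j, cof A i j ^ 2 = (Aᵀ * A).trace ^ 2 - (Aᵀ * A * (Aᵀ * A)).trace := by
  simp only [cof, adjugate_fin_three, trace, diag, mul_apply, transpose_apply, Fin.sum_univ_three,
    of_apply, cons_val_zero, cons_val_one, cons_val_two, head_cons, tail_cons]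
  ring

lemma exists_squared_singular_values (A : Matrix (Fin 3) (Fin 3) ℝ) :
    ∃ a b c : ℝ, 0 ≤ a ∧ 0 ≤ b ∧ 0 ≤ c ∧ ∑ i, ∑ j, A i j ^ 2 = a + b + c ∧
      ∑ i, ∑ j, cof A i j ^ 2 = a * b + b * c + c * a ∧ a * b * c = A.det ^ 2 := by
  have hM : (Aᵀ * A).PosSemidef := by
    simpa [conjTranspose_eq_transpose_of_trivial] using posSemidef_conjTranspose_mul_self A
  set σ := hM.isHermitian.eigenvalues
  have htrace : (Aᵀ * A).trace = σ 0 + σ 1 + σ 2 := by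
    simp [hM.isHermitian.trace_eq_sum_eigenvalues, Fin.sum_univ_three, σ]
  have htrace_sq : (Aᵀ * A * (Aᵀ * A)).trace = σ 0 ^ 2 + σ 1 ^ 2 + σ 2 ^ 2 := by
    simp [hM.isHermitian.trace_mul_self_eq_sum_sq_eigenvalues, Fin.sum_univ_three, σ]
  have hdet : (Aᵀ * A).det = σ 0 * σ 1 * σ 2 := by
    simp [hM.isHermitian.det_eq_prod_eigenvalues, Fin.prod_univ_three, σ]
  refine ⟨σ 0, σ 1, σ 2, hM.eigenvalues_nonneg 0, hM.eigenvalues_nonneg 1,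
    hM.eigenvalues_nonneg 2, by rw [sum_sq_eq_trace_transpose_mul_self, htrace], ?_, ?_⟩
  · have h := two_mul_sum_sq_cof A
    rw [htrace, htrace_sq] at h
    linear_combination h / 2
  · rw [← hdet, det_mul, det_transpose, sq]

theorem frob_sq_ge_two_frob_cof_sub (A : Matrix (Fin 3) (Fin 3) ℝ) (hA : 0 < A.det) :
    frob A ^ 2 ≥ 2 * frob (cof A) - 2 * max 1 A.det := by
  obtain ⟨a, b, c, ha, hb, hc, hsum, hsum_cof, hprod⟩ := exists_squared_singular_values A
  have hprod_le : a * b * c ≤ max 1 A.det ^ 2 :=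
    hprod ▸ pow_le_pow_left₀ hA.le (le_max_right 1 A.det) 2
  have key := two_mul_sqrt_sum_mul_le ha hb hc (le_max_left 1 A.det) hprod_le
  rw [ge_iff_le, frob, frob, Real.sq_sqrt (by positivity), hsum, hsum_cof]
  linarith
end

section
/- For every real 3×3 matrix B with positive determinant, |cof B|² / det B ≥ 2|B| − 2·max{1, det B}. -/
/-!
Let `x, y, z ≥ 0` be the eigenvalues of `Bᵀ B` and `d = det B`. Then `|B|² = e₁`, `|cof B|² = e₂`
and `d² = e₃` are their elementary symmetric functions, and since `2 max 1 d ≥ 1 + d` it suffices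
to show `2 d √e₁ ≤ e₂ + d + d²`. Squaring, this follows from `4 e₁ e₃ ≤ (e₂ + e₃)² + e₃`, which
holds because, for `z` the smallest eigenvalue,
`(e₂ + e₃)² + e₃ - 4 e₁ e₃ = (xy - yz - zx)² + e₃ (2 e₂ - 4 z + e₃ + 1)` and `2 e₂ ≥ 6 z² > 4 z - 1`.
-/

open Matrix

lemma four_mul_prod_mul_sum_le_of_le_of_le {x y z : ℝ} (hx : 0 ≤ x) (hy : 0 ≤ y) (hz : 0 ≤ z)
    (hzx : z ≤ x) (hzy : z ≤ y) :
    4 * (x * y * z) * (x + y + z) ≤ (x * y + y * z + z * x + x * y * z) ^ 2 + x * y * z := by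
  have h_gap : (x * y + y * z + z * x + x * y * z) ^ 2 + x * y * z - 4 * (x * y * z) * (x + y + z)
      = (x * y - y * z - z * x) ^ 2
        + x * y * z * (2 * (x * y + y * z + z * x) - 4 * z + x * y * z + 1) := by ring
  have h_bracket : 0 ≤ 2 * (x * y + y * z + z * x) - 4 * z + x * y * z + 1 := by
    nlinarith [mul_le_mul hzx hzy hz hx, sq_nonneg (3 * z - 1), mul_nonneg (mul_nonneg hx hy) hz]
  rw [← sub_nonneg, h_gap]
  exact add_nonneg (sq_nonneg _) (mul_nonneg (by positivity) h_bracket)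

lemma four_mul_prod_mul_sum_le {x y z : ℝ} (hx : 0 ≤ x) (hy : 0 ≤ y) (hz : 0 ≤ z) :
    4 * (x * y * z) * (x + y + z) ≤ (x * y + y * z + z * x + x * y * z) ^ 2 + x * y * z := by
  rcases le_total x y with hxy | hyx
  · rcases le_total z x with hzx | hxz
    · exact four_mul_prod_mul_sum_le_of_le_of_le hx hy hz hzx (hzx.trans hxy)
    · linarith [four_mul_prod_mul_sum_le_of_le_of_le hy hz hx hxy hxz]
  · rcases le_total z y with hzy | hyz
    · exact four_mul_prod_mul_sum_le_of_le_of_le hx hy hz (hzy.trans hyx) hzy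
    · linarith [four_mul_prod_mul_sum_le_of_le_of_le hz hx hy hyz hyx]

lemma two_mul_mul_sqrt_sum_le {x y z d : ℝ} (hx : 0 ≤ x) (hy : 0 ≤ y) (hz : 0 ≤ z) (hd : 0 ≤ d)
    (hd_sq : d ^ 2 = x * y * z) :
    2 * d * √(x + y + z) ≤ x * y + y * z + z * x + d + d ^ 2 := by
  have h_e₂ : 0 ≤ x * y + y * z + z * x := by positivity
  have h_sq : (2 * d * √(x + y + z)) ^ 2 ≤ (x * y + y * z + z * x + d + d ^ 2) ^ 2 :=
    calc (2 * d * √(x + y + z)) ^ 2 = 4 * (x * y * z) * (x + y + z) := by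
          rw [mul_pow, Real.sq_sqrt (by positivity), mul_pow, hd_sq]; ring
      _ ≤ (x * y + y * z + z * x + x * y * z) ^ 2 + x * y * z := four_mul_prod_mul_sum_le hx hy hz
      _ ≤ (x * y + y * z + z * x + d + d ^ 2) ^ 2 := by
          rw [← hd_sq]; nlinarith [mul_nonneg hd (add_nonneg h_e₂ (sq_nonneg d))]
  exact (pow_le_pow_iff_left₀ (by positivity) (by positivity) two_ne_zero).mp h_sq

namespace Matrix

theorem IsHermitian.trace_adjugate_eq_sum_prod_eigenvalues {𝕜 n : Type*} [RCLike 𝕜] [Fintype n]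
    [DecidableEq n] {A : Matrix n n 𝕜} (hA : A.IsHermitian) :
    A.adjugate.trace = ∑ i, ∏ j ∈ Finset.univ.erase i, (hA.eigenvalues j : 𝕜) := by
  set U : Matrix n n 𝕜 := (hA.eigenvectorUnitary : Matrix n n 𝕜)
  have hU : star U * U = 1 := Unitary.coe_star_mul_self _
  conv_lhs => rw [hA.spectral_theorem, Unitary.conjStarAlgAut_apply]
  rw [adjugate_mul_distrib, adjugate_mul_distrib, ← Matrix.mul_assoc, trace_mul_cycle,
    ← adjugate_mul_distrib, hU, adjugate_one, Matrix.one_mul, adjugate_diagonal, trace_diagonal]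
  rfl

theorem posSemidef_transpose_mul_self {m n : Type*} [Fintype m] [Fintype n] (A : Matrix m n ℝ) :
    (Aᵀ * A).PosSemidef := by
  simpa only [conjTranspose_eq_transpose_of_trivial] using posSemidef_conjTranspose_mul_self A

end Matrix

lemma frob_eq_sqrt_trace (A : Matrix (Fin 3) (Fin 3) ℝ) : frob A = √(Aᵀ * A).trace := by
  rw [frob, trace, Finset.sum_comm]
  simp only [diag, mul_apply, transpose_apply, sq]

lemma frob_sq_eq_trace (A : Matrix (Fin 3) (Fin 3) ℝ) : frob A ^ 2 = (Aᵀ * A).trace := by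
  rw [frob_eq_sqrt_trace, Real.sq_sqrt (posSemidef_transpose_mul_self A).trace_nonneg]

lemma frob_cof_sq_eq_trace_adjugate (A : Matrix (Fin 3) (Fin 3) ℝ) :
    frob (cof A) ^ 2 = (Aᵀ * A).adjugate.trace := by
  rw [frob_sq_eq_trace, cof, transpose_transpose, adjugate_mul_distrib, adjugate_transpose]

lemma two_mul_det_mul_frob_le (B : Matrix (Fin 3) (Fin 3) ℝ) (hB : 0 ≤ B.det) :
    2 * B.det * frob B ≤ frob (cof B) ^ 2 + B.det + B.det ^ 2 := by
  have hPSD := posSemidef_transpose_mul_self B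
  set μ := hPSD.isHermitian.eigenvalues
  have h_frob : frob B = √(μ 0 + μ 1 + μ 2) := by
    rw [frob_eq_sqrt_trace, hPSD.isHermitian.trace_eq_sum_eigenvalues, Fin.sum_univ_three]
    rfl
  have h_cof : frob (cof B) ^ 2 = μ 0 * μ 1 + μ 1 * μ 2 + μ 2 * μ 0 := by
    rw [frob_cof_sq_eq_trace_adjugate, hPSD.isHermitian.trace_adjugate_eq_sum_prod_eigenvalues,
      Fin.sum_univ_three, show Finset.univ.erase (0 : Fin 3) = {1, 2} by decide,
      show Finset.univ.erase (1 : Fin 3) = {0, 2} by decide,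
      show Finset.univ.erase (2 : Fin 3) = {0, 1} by decide]
    simp only [RCLike.ofReal_real_eq_id, id, Finset.prod_pair (by decide : (1 : Fin 3) ≠ 2),
      Finset.prod_pair (by decide : (0 : Fin 3) ≠ 2), Finset.prod_pair (by decide : (0 : Fin 3) ≠ 1)]
    ring
  have h_det : B.det ^ 2 = μ 0 * μ 1 * μ 2 := by
    rw [show B.det ^ 2 = (Bᵀ * B).det by rw [det_mul, det_transpose, sq],
      hPSD.isHermitian.det_eq_prod_eigenvalues, Fin.prod_univ_three]
    rfl
  rw [h_frob, h_cof]
  exact two_mul_mul_sqrt_sum_le (hPSD.eigenvalues_nonneg 0) (hPSD.eigenvalues_nonneg 1)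
    (hPSD.eigenvalues_nonneg 2) hB h_det

theorem frob_cof_sq_div_det_ge (B : Matrix (Fin 3) (Fin 3) ℝ) (hB : 0 < B.det) :
    frob (cof B) ^ 2 / B.det ≥ 2 * frob B - 2 * max 1 B.det := by
  have h_max : 1 + B.det ≤ 2 * max 1 B.det := by
    linarith [le_max_left 1 B.det, le_max_right 1 B.det]
  rw [ge_iff_le, le_div_iff₀ hB]
  nlinarith [two_mul_det_mul_frob_le B hB.le]
end

section
/- For a diagonal 3×3 matrix A with positive diagonal entries v₁ ≤ v₂ ≤ v₃, the inequality |A|² ≥ 2|cof A| − 2·max{1, v₁v₂v₃} holds, where |A|² = v₁² + v₂² + v₃² and |cof A|² = v₂²v₃² + v₁²v₃² + v₁²v₂². -/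
set_option maxHeartbeats 800000


theorem diagonal_ineq (v₁ v₂ v₃ : ℝ) (h₀ : 0 < v₁) (h₁₂ : v₁ ≤ v₂) (h₂₃ : v₂ ≤ v₃) :
    frob (Matrix.diagonal ![v₁, v₂, v₃]) ^ 2 = v₁ ^ 2 + v₂ ^ 2 + v₃ ^ 2 ∧
    frob (cof (Matrix.diagonal ![v₁, v₂, v₃])) ^ 2 =
      v₂ ^ 2 * v₃ ^ 2 + v₁ ^ 2 * v₃ ^ 2 + v₁ ^ 2 * v₂ ^ 2 ∧
    frob (Matrix.diagonal ![v₁, v₂, v₃]) ^ 2 ≥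
      2 * frob (cof (Matrix.diagonal ![v₁, v₂, v₃])) - 2 * max 1 (v₁ * v₂ * v₃) := by
  have hA : frob (Matrix.diagonal ![v₁, v₂, v₃]) ^ 2 = v₁ ^ 2 + v₂ ^ 2 + v₃ ^ 2 := by
    rw [frob, Real.sq_sqrt]
    · simp [Fin.sum_univ_three, Matrix.diagonal]
    · positivity
  have hcof : ∑ i, ∑ j, (cof (Matrix.diagonal ![v₁, v₂, v₃])) i j ^ 2 =
      v₂ ^ 2 * v₃ ^ 2 + v₁ ^ 2 * v₃ ^ 2 + v₁ ^ 2 * v₂ ^ 2 := by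
    simp [cof, Matrix.adjugate_fin_three, Fin.sum_univ_three, Matrix.transpose,
      Matrix.diagonal]
    ring
  have hC : frob (cof (Matrix.diagonal ![v₁, v₂, v₃])) ^ 2 =
      v₂ ^ 2 * v₃ ^ 2 + v₁ ^ 2 * v₃ ^ 2 + v₁ ^ 2 * v₂ ^ 2 := by
    rw [frob, Real.sq_sqrt, hcof]
    positivity
  refine ⟨hA, hC, ?_⟩
  rw [hA, frob, hcof]
  set m : ℝ := max 1 (v₁ * v₂ * v₃) with hm
  have hm1 : (1:ℝ) ≤ m := le_max_left _ _
  have hmd : v₁ * v₂ * v₃ ≤ m := le_max_right _ _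
  have hkey : Real.sqrt (v₂ ^ 2 * v₃ ^ 2 + v₁ ^ 2 * v₃ ^ 2 + v₁ ^ 2 * v₂ ^ 2) ≤
      (v₁ ^ 2 + v₂ ^ 2 + v₃ ^ 2 + 2 * m) / 2 := by
    have h2 : v₂ ^ 2 * v₃ ^ 2 + v₁ ^ 2 * v₃ ^ 2 + v₁ ^ 2 * v₂ ^ 2 ≤
        ((v₁ ^ 2 + v₂ ^ 2 + v₃ ^ 2 + 2 * m) / 2) ^ 2 := by
      rcases le_total 1 (v₁ * v₂ * v₃) with h | h
      · have hm' : m = v₁ * v₂ * v₃ := max_eq_right h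
        have hvv : v₁ ≤ v₂ * v₃ := by
          rcases le_total v₁ 1 with h1 | h1
          · nlinarith
          · nlinarith
        have h2d : v₁ ^ 2 ≤ 2 * (v₁ * v₂ * v₃) := by nlinarith
        rw [hm']
        nlinarith [mul_nonneg (by positivity : (0:ℝ) ≤ v₂ ^ 2 + v₃ ^ 2)
            (by linarith : (0:ℝ) ≤ 2 * (v₁ * v₂ * v₃) - v₁ ^ 2),
          sq_nonneg (v₂ ^ 2 - v₃ ^ 2), sq_nonneg (v₁ ^ 2),
          mul_nonneg (by positivity : (0:ℝ) ≤ v₁ * v₂ * v₃) (sq_nonneg v₁),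
          sq_nonneg (v₁ * v₂ * v₃)]
      · have hm' : m = 1 := max_eq_left h
        have hab : v₁ * v₂ ≤ 1 := by
          rcases le_total v₃ 1 with h1 | h1
          · nlinarith
          · nlinarith
        have hac : v₁ ^ 2 * v₃ ≤ 1 := by nlinarith
        have h1 : v₁ ^ 2 * v₂ ^ 2 ≤ 1 := by nlinarith [mul_pos h₀ (h₀.trans_le h₁₂)]
        have h2 : v₁ ^ 2 * v₃ ^ 2 ≤ v₃ := by nlinarith [h₀.trans_le (h₁₂.trans h₂₃)]
        rw [hm']
        nlinarith [sq_nonneg (v₂ ^ 2 - v₃ ^ 2), sq_nonneg (v₁ ^ 2), sq_nonneg (v₃ - 1)]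
    calc Real.sqrt (v₂ ^ 2 * v₃ ^ 2 + v₁ ^ 2 * v₃ ^ 2 + v₁ ^ 2 * v₂ ^ 2)
        ≤ Real.sqrt (((v₁ ^ 2 + v₂ ^ 2 + v₃ ^ 2 + 2 * m) / 2) ^ 2) := Real.sqrt_le_sqrt h2
      _ = (v₁ ^ 2 + v₂ ^ 2 + v₃ ^ 2 + 2 * m) / 2 := by
          rw [Real.sqrt_sq]; positivity
  linarith
end

section
/- Let g : ℝ³ → ℝ³ be the restriction of a function with ∑_{x : u(x)=y, x ∈ S} w(x)·φ(x) = φ(v(y)) for all bounded Borel φ and a.e. y, where w(x) > 0. Then for a.e. such y: v(y) ∈ S, u(v(y)) = y, the sum has exactly one term x = v(y), and w(v(y)) = 1. -/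
open MeasureTheory

abbrev V3 := Fin 3 → ℝ

theorem single_preimage_identity (S Y : Set V3) (hS : MeasurableSet S)
    (hY : MeasurableSet Y)
    (u : V3 → V3) (v : V3 → V3) (w : V3 → ℝ)
    (hu : Measurable u) (hv : Measurable v) (hw : Measurable w)
    (hwpos : ∀ x ∈ S, 0 < w x)
    (hid : ∀ᵐ y ∂(volume.restrict Y), ∀ φ : V3 → ℝ,
      Measurable φ → (∃ C, ∀ z, |φ z| ≤ C) →
      (∑' x : {x : V3 // x ∈ S ∧ u x = y}, w x * φ x) = φ (v y)) :
    ∀ᵐ y ∂(volume.restrict Y),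
      v y ∈ S ∧ u (v y) = y ∧ {x : V3 | x ∈ S ∧ u x = y} = {v y} ∧ w (v y) = 1 := by
  filter_upwards [hid] with y hy
  have h1 := hy (fun _ => 1) measurable_const ⟨1, fun z => by norm_num⟩
  simp only [mul_one] at h1
  -- Step 1: every preimage point equals v y
  have hsub : ∀ x : V3, x ∈ S ∧ u x = y → x = v y := by
    intro x hx
    by_contra hne
    set φ : V3 → ℝ := Set.indicator {x} 1 with hφ
    have hmφ : Measurable φ := measurable_one.indicator (measurableSet_singleton x)
    have hb : ∃ C, ∀ z, |φ z| ≤ C := ⟨1, fun z => by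
      by_cases h : z = x <;> simp [hφ, Set.indicator, h]⟩
    have h2 := hy φ hmφ hb
    have hφv : φ (v y) = 0 := by
      simp only [hφ, Set.indicator, Set.mem_singleton_iff]
      rw [if_neg (fun h => hne h.symm)]
    have hsum2 : Summable fun p : {x : V3 // x ∈ S ∧ u x = y} => w p * φ p := by
      apply summable_of_ne_finset_zero (s := {(⟨x, hx⟩ : {x : V3 // x ∈ S ∧ u x = y})})
      intro b hb
      have hbx : (b : V3) ≠ x := by
        intro h
        exact hb (by simp only [Finset.mem_singleton]; exact Subtype.ext h)
      simp [hφ, Set.indicator, hbx]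
    have hle := Summable.le_tsum hsum2 ⟨x, hx⟩ (fun b _ => by
      by_cases h : (b : V3) = x
      · simp [hφ, Set.indicator, h]
        exact (hwpos x hx.1).le
      · simp [hφ, Set.indicator, h])
    rw [h2, hφv] at hle
    simp [hφ, Set.indicator] at hle
    exact absurd hle (not_le.mpr (hwpos x hx.1))
  -- Step 2: v y is a preimage point
  have hne : Nonempty {x : V3 // x ∈ S ∧ u x = y} := by
    by_contra h
    haveI : IsEmpty {x : V3 // x ∈ S ∧ u x = y} := not_nonempty_iff.mp h
    rw [tsum_empty] at h1
    norm_num at h1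
  obtain ⟨x0⟩ := hne
  have hvP : v y ∈ S ∧ u (v y) = y := by
    have := hsub x0 x0.2
    rw [← this]; exact x0.2
  -- Step 3: the set equals {v y}
  have hset : {x : V3 | x ∈ S ∧ u x = y} = {v y} := by
    apply Set.eq_singleton_iff_unique_mem.mpr
    exact ⟨hvP, fun x hx => hsub x hx⟩
  -- Step 4: w (v y) = 1
  have hw1 : w (v y) = 1 := by
    rw [tsum_eq_single (⟨v y, hvP⟩ : {x : V3 // x ∈ S ∧ u x = y})
      (fun b hb => absurd (Subtype.ext (hsub b b.2)) hb)] at h1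
    exact h1
  exact ⟨hvP.1, hvP.2, hset, hw1⟩
end
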